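/- With à = Σ₀^{-1/2}(Σ₀^{1/2} Σ₁ Σ₀^{1/2})^{1/2} Σ₀^{-1/2} and T(x) = Ã(x − m₀) + m₁, the pushforward of the Gaussian measure N(m₀, Σ₀) under T is the Gaussian measure N(m₁, Σ₁). -/
import Mathlib


open Matrix MeasureTheory

/-- `μ` is the Gaussian measure on `ℝⁿ` with mean `m` and covariance `C`:
every linear functional `x ↦ v ⬝ᵥ x` pushes `μ` to the one-dimensional
Gaussian with mean `v ⬝ᵥ m` and variance `vᵀ C v`. -/
def IsGaussian {n : ℕ} (μ : Measure (Fin n → ℝ)) (m : Fin n → ℝ)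
    (C : Matrix (Fin n) (Fin n) ℝ) : Prop :=
  ∀ v : Fin n → ℝ,
    μ.map (fun x => v ⬝ᵥ x) =
      ProbabilityTheory.gaussianReal (v ⬝ᵥ m) (v ⬝ᵥ (C *ᵥ v)).toNNReal

lemma meas_dot {n : ℕ} (v : Fin n → ℝ) : Measurable (fun x : Fin n → ℝ => v ⬝ᵥ x) := by
  unfold dotProduct
  exact Finset.measurable_sum _ (fun i _ => (measurable_pi_apply i).const_mul _)

lemma meas_aff {n : ℕ} (A : Matrix (Fin n) (Fin n) ℝ) (m₀ m₁ : Fin n → ℝ) :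
    Measurable (fun x : Fin n → ℝ => A *ᵥ (x - m₀) + m₁) := by
  apply Measurable.add_const _ m₁
  apply measurable_pi_lambda
  intro i
  unfold Matrix.mulVec dotProduct
  exact Finset.measurable_sum _ (fun j _ => (((measurable_pi_apply j).sub_const _).const_mul _))

/-- With `Ã = C0^{-1/2}(C0^{1/2} C1 C0^{1/2})^{1/2} C0^{-1/2}` and
`T x = Ã (x − m₀) + m₁`, the pushforward of `N(m₀, C0)` under `T` is
`N(m₁, C1)`. -/
theorem gaussian_pushforward {n : ℕ} (C0 C1 S K Atil : Matrix (Fin n) (Fin n) ℝ)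
    (hC0 : C0.PosDef) (hC1 : C1.PosDef)
    (hS : S.PosDef) (hSsq : S * S = C0)
    (hK : K.PosDef) (hKsq : K * K = S * C1 * S)
    (hA : Atil = S⁻¹ * K * S⁻¹)
    (m₀ m₁ : Fin n → ℝ) (μ₀ : Measure (Fin n → ℝ)) [IsProbabilityMeasure μ₀]
    (hμ₀ : IsGaussian μ₀ m₀ C0) :
    IsGaussian (μ₀.map (fun x => Atil *ᵥ (x - m₀) + m₁)) m₁ C1 := by
  simp only [IsGaussian] at hμ₀ ⊢
  intro v
  have hSdet : IsUnit S.det := hS.det_pos.ne'.isUnit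
  have hSinv : S⁻¹ * S = 1 := nonsing_inv_mul S hSdet
  have hSinv' : S * S⁻¹ = 1 := mul_nonsing_inv S hSdet
  have hSsym : Sᵀ = S := by
    have := hS.isHermitian; simpa [Matrix.IsHermitian] using this
  have hKsym : Kᵀ = K := by
    have := hK.isHermitian; simpa [Matrix.IsHermitian] using this
  have hAsym : Atilᵀ = Atil := by
    rw [hA, Matrix.transpose_mul, Matrix.transpose_mul, Matrix.transpose_nonsing_inv,
      hSsym, hKsym, Matrix.mul_assoc]
  have hACA : Atil * (C0 * Atilᵀ) = C1 := by
    rw [hAsym, hA, ← hSsq]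
    simp only [Matrix.mul_assoc]
    rw [Matrix.nonsing_inv_mul_cancel_left _ _ hSdet,
      Matrix.mul_nonsing_inv_cancel_left _ _ hSdet,
      ← Matrix.mul_assoc K K, hKsq]
    simp only [Matrix.mul_assoc]
    rw [Matrix.nonsing_inv_mul_cancel_left _ _ hSdet, hSinv', Matrix.mul_one]
  set w := Atilᵀ *ᵥ v with hw
  set c := v ⬝ᵥ m₁ - w ⬝ᵥ m₀ with hc
  have hkey : (fun x : Fin n → ℝ => v ⬝ᵥ (Atil *ᵥ (x - m₀) + m₁)) =
      (fun y : ℝ => y + c) ∘ (fun x => w ⬝ᵥ x) := by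
    funext x
    simp only [Function.comp_apply, hc, hw, Matrix.mulVec_transpose, dotProduct_add,
      Matrix.dotProduct_mulVec, dotProduct_sub]
    ring
  have dot_trans : ∀ z : Fin n → ℝ, (Atilᵀ *ᵥ v) ⬝ᵥ z = v ⬝ᵥ (Atil *ᵥ z) := by
    intro z
    rw [Matrix.mulVec_transpose, ← Matrix.dotProduct_mulVec]
  have hvar : w ⬝ᵥ (C0 *ᵥ w) = v ⬝ᵥ (C1 *ᵥ v) := by
    rw [hw, Matrix.mulVec_mulVec, dot_trans, Matrix.mulVec_mulVec, hACA]
  rw [Measure.map_map (meas_dot v) (meas_aff Atil m₀ m₁)]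
  show μ₀.map (fun x => v ⬝ᵥ (Atil *ᵥ (x - m₀) + m₁)) = _
  rw [hkey, ← Measure.map_map (measurable_add_const c) (meas_dot w), hμ₀ w,
    ProbabilityTheory.gaussianReal_map_add_const c, hvar]
  congr 1
  simp [hc]
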